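/- arXiv:1510.05351 — 2 statements merged into one kernel-verified Lean document; each statement's English description precedes it below -/
import Mathlib

section
/- Let k ≥ 3 and i satisfy 1 ≤ i < k. For every integer n_2 with 1 ≤ n_2 < F_{i+1} and every integer ℓ with ℓ·F_k − n_2·F_{k-1} ≠ 0, one has |ℓ·F_k − n_2·F_{k-1}| ≥ F_{k-i}. -/
lemma fibId (i m : ℕ) :
    (Nat.fib i : ℤ) * Nat.fib (m + i + 1) - Nat.fib (i + 1) * Nat.fib (m + i) =
      (-1) ^ (i + 1) * Nat.fib m := by
  induction i with
  | zero => simp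
  | succ n ih =>
    have e1 : m + (n + 1) + 1 = (m + n) + 2 := by omega
    have e2 : m + (n + 1) = (m + n) + 1 := by omega
    rw [e1, e2, Nat.fib_add_two, show n + 1 + 1 = n + 2 by omega, Nat.fib_add_two]
    push_cast
    linear_combination -ih

lemma fib_aux (k : ℕ) (hk : 3 ≤ k) :
    ∀ i, 1 ≤ i → i < k → ∀ n₂ : ℤ, 1 ≤ n₂ → n₂ < Nat.fib (i + 1) →
    ∀ ℓ : ℤ, ℓ * Nat.fib k - n₂ * Nat.fib (k - 1) ≠ 0 →
    (Nat.fib (k - i) : ℤ) ≤ |ℓ * Nat.fib k - n₂ * Nat.fib (k - 1)| := by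
  intro i
  induction i using Nat.strong_induction_on with
  | _ i IH =>
  intro hi hik n₂ hn₂ hn₂' ℓ hℓ
  rcases Nat.lt_or_ge i 2 with h2 | h2
  · -- i = 1 : vacuous
    interval_cases i
    · simp [Nat.fib] at hn₂'
      omega
  rcases lt_or_ge n₂ (Nat.fib i : ℤ) with hlt | hge
  · -- n₂ < fib i : use IH at i - 1
    have h := IH (i - 1) (by omega) (by omega) (by omega) n₂ hn₂
      (by rwa [show i - 1 + 1 = i by omega]) ℓ hℓ
    refine le_trans ?_ h
    exact_mod_cast Nat.fib_mono (by omega : k - i ≤ k - (i - 1))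
  · -- fib i ≤ n₂ < fib (i+1)
    set D := ℓ * (Nat.fib k : ℤ) - n₂ * Nat.fib (k - 1) with hD
    set ℓ' := ℓ - (Nat.fib (i - 1) : ℤ) with hℓ'
    set n₂' := n₂ - (Nat.fib i : ℤ) with hn₂d
    have hid := fibId (i - 1) (k - i)
    rw [show i - 1 + 1 = i by omega, show k - i + (i - 1) + 1 = k by omega,
      show k - i + (i - 1) = k - 1 by omega] at hid
    have hkey : D = (ℓ' * Nat.fib k - n₂' * Nat.fib (k - 1)) + (-1) ^ i * Nat.fib (k - i) := by
      rw [hD, hℓ', hn₂d, ← hid]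
      ring
    have habs : |(-1 : ℤ) ^ i * Nat.fib (k - i)| = Nat.fib (k - i) := by
      rw [abs_mul, abs_pow, abs_neg, abs_one, one_pow, one_mul,
        abs_of_nonneg (by positivity)]
    have hn₂'lt : n₂' < (Nat.fib (i - 1) : ℤ) := by
      have : Nat.fib (i + 1) = Nat.fib i + Nat.fib (i - 1) := by
        rw [show i + 1 = (i - 1) + 2 by omega, Nat.fib_add_two,
          show i - 1 + 1 = i by omega]
        ring
      rw [hn₂d]
      push_cast [this] at hn₂' ⊢
      linarith
    rcases eq_or_lt_of_le (by rw [hn₂d]; linarith : (0 : ℤ) ≤ n₂') with hz | hpos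
    · -- n₂' = 0
      have hD0 : D = ℓ' * Nat.fib k + (-1) ^ i * Nat.fib (k - i) := by
        rw [hkey, ← hz]; ring
      rcases eq_or_ne ℓ' 0 with hl0 | hl0
      · rw [hD0, hl0, zero_mul, zero_add, habs]
      · -- |D| ≥ fib k - fib (k-i) ≥ fib (k-i)
        have h1 : (Nat.fib k : ℤ) ≤ |ℓ' * Nat.fib k| := by
          rw [abs_mul, abs_of_nonneg (by positivity : (0:ℤ) ≤ (Nat.fib k : ℤ))]
          have : (1 : ℤ) ≤ |ℓ'| := Int.one_le_abs (by omega)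
          nlinarith [Nat.fib_pos.mpr (by omega : 0 < k), abs_nonneg ℓ']
        have h2' : 2 * (Nat.fib (k - i) : ℤ) ≤ Nat.fib k := by
          have hm : Nat.fib (k - i) ≤ Nat.fib (k - 2) := Nat.fib_mono (by omega)
          have hs : (Nat.fib k : ℤ) = Nat.fib (k - 2) + Nat.fib (k - 1) := by
            have h := Nat.fib_add_two (n := k - 2)
            rw [show k - 2 + 2 = k by omega, show k - 2 + 1 = k - 1 by omega] at h
            exact_mod_cast h
          have hm2 : Nat.fib (k - 2) ≤ Nat.fib (k - 1) := Nat.fib_mono (by omega)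
          push_cast at hm hm2
          linarith [hs]
        have h3 : |ℓ' * Nat.fib k| ≤ |D| + |(-1 : ℤ) ^ i * Nat.fib (k - i)| := by
          calc |ℓ' * (Nat.fib k : ℤ)| = |D - (-1) ^ i * Nat.fib (k - i)| := by
                rw [hD0]; ring_nf
            _ ≤ |D| + |(-1 : ℤ) ^ i * Nat.fib (k - i)| := abs_sub _ _
        rw [habs] at h3
        linarith
    · -- n₂' ≥ 1
      have hi3 : 3 ≤ i := by
        by_contra h
        have : i = 2 := by omega
        subst this
        simp [Nat.fib] at hn₂'lt
        omega
      set D' := ℓ' * (Nat.fib k : ℤ) - n₂' * Nat.fib (k - 1) with hD'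
      have hD'ne : D' ≠ 0 := by
        intro h0
        have heq : ℓ' * (Nat.fib k : ℤ) = n₂' * Nat.fib (k - 1) := by
          rw [hD'] at h0; linarith
        have hcop : IsCoprime ((Nat.fib k : ℤ)) (Nat.fib (k - 1)) := by
          rw [Nat.isCoprime_iff_coprime]
          have := Nat.fib_coprime_fib_succ (k - 1)
          rw [show k - 1 + 1 = k by omega] at this
          exact this.symm
        have hdvd : (Nat.fib k : ℤ) ∣ n₂' * Nat.fib (k - 1) := ⟨ℓ', by linarith⟩
        have hdvd' : (Nat.fib k : ℤ) ∣ n₂' := hcop.dvd_of_dvd_mul_right hdvd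
        have hle : (Nat.fib k : ℤ) ≤ n₂' := Int.le_of_dvd hpos hdvd'
        have : (Nat.fib (i - 1) : ℤ) ≤ Nat.fib k := by
          exact_mod_cast Nat.fib_mono (by omega)
        linarith
      have hIH := IH (i - 2) (by omega) (by omega) (by omega) n₂' (by omega)
        (by rwa [show i - 2 + 1 = i - 1 by omega]) ℓ' hD'ne
      rw [← hD'] at hIH
      have hfib2 : (Nat.fib (k - (i - 2)) : ℤ) = Nat.fib (k - i + 1) + Nat.fib (k - i) := by
        rw [show k - (i - 2) = (k - i) + 2 by omega, Nat.fib_add_two]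
        push_cast; ring
      have h3 : |D'| ≤ |D| + |(-1 : ℤ) ^ i * Nat.fib (k - i)| := by
        calc |D'| = |D - (-1) ^ i * Nat.fib (k - i)| := by rw [hkey]; ring_nf
          _ ≤ |D| + |(-1 : ℤ) ^ i * Nat.fib (k - i)| := abs_sub _ _
      rw [habs] at h3
      have hmono : (Nat.fib (k - i) : ℤ) ≤ Nat.fib (k - i + 1) := by
        exact_mod_cast Nat.fib_mono (by omega)
      linarith [hfib2 ▸ hIH]

theorem fib_best_approx (k i : ℕ) (hk : 3 ≤ k) (hi : 1 ≤ i) (hik : i < k)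
    (n₂ : ℤ) (hn₂ : 1 ≤ n₂) (hn₂' : n₂ < Nat.fib (i + 1))
    (ℓ : ℤ) (hℓ : ℓ * Nat.fib k - n₂ * Nat.fib (k - 1) ≠ 0) :
    (Nat.fib (k - i) : ℤ) ≤ |ℓ * Nat.fib k - n₂ * Nat.fib (k - 1)| :=
  fib_aux k hk i hi hik n₂ hn₂ hn₂' ℓ hℓ
end

section
/- Let φ = (1+√5)/2. There is a constant C > 0 such that for all k ≥ 3, ∑_{i=⌊k/3⌋+1}^{⌈k/2⌉−1} ∑_{m=k−i}^{⌊2k/3⌋−1} φ^{i − k − m/2} ≤ C·φ^{−3k/4}. -/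
open Finset

lemma geom_range_le {b : ℝ} (hb0 : 0 ≤ b) (hb1 : b < 1) (n : ℕ) :
    ∑ j ∈ range n, b ^ j ≤ 1 / (1 - b) := by
  have h1b : 0 < 1 - b := by linarith
  rw [geom_sum_eq hb1.ne]
  have h : (b ^ n - 1) / (b - 1) = (1 - b ^ n) / (1 - b) := by
    rw [← neg_div_neg_eq]; ring_nf
  rw [h]
  gcongr
  nlinarith [pow_nonneg hb0 n]

lemma geoIcc {b : ℝ} (hb0 : 0 ≤ b) (hb1 : b < 1) (s t : ℕ) :
    ∑ m ∈ Icc s t, b ^ m ≤ b ^ s / (1 - b) := by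
  have h1b : 0 < 1 - b := by linarith
  rcases le_or_gt s t with h | h
  · rw [← Finset.Ico_add_one_right_eq_Icc, Finset.sum_Ico_eq_sum_range]
    simp_rw [pow_add, ← Finset.mul_sum]
    rw [div_eq_mul_one_div]
    exact mul_le_mul_of_nonneg_left (geom_range_le hb0 hb1 _) (pow_nonneg hb0 s)
  · rw [Finset.Icc_eq_empty (by omega)]
    simp only [Finset.sum_empty]
    positivity

lemma geo2 {b : ℝ} (hb0 : 0 ≤ b) (hb1 : b < 1) (lo hi k : ℕ) (hk : hi ≤ k) :
    ∑ i ∈ Icc lo hi, b ^ (k - i) ≤ b ^ (k - hi) / (1 - b) := by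
  have hinj : ∀ x ∈ Icc lo hi, ∀ y ∈ Icc lo hi, k - x = k - y → x = y := by
    intro x hx y hy h
    simp only [mem_Icc] at hx hy
    omega
  rw [← Finset.sum_image (g := fun i => k - i) (f := fun j => b ^ j) hinj]
  refine le_trans (Finset.sum_le_sum_of_subset_of_nonneg ?_ ?_) (geoIcc hb0 hb1 (k - hi) k)
  · intro j hj
    simp only [Finset.mem_image, mem_Icc] at hj ⊢
    obtain ⟨i, hi', rfl⟩ := hj
    omega
  · intro j _ _
    positivity

theorem double_geom_sum_bound :
    ∃ C > (0 : ℝ), ∀ k : ℕ, 3 ≤ k →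
      ∑ i ∈ Finset.Icc (k / 3 + 1) ((k + 1) / 2 - 1),
        ∑ m ∈ Finset.Icc (k - i) (2 * k / 3 - 1),
          ((1 + Real.sqrt 5) / 2) ^ ((i : ℝ) - k - m / 2) ≤
        C * ((1 + Real.sqrt 5) / 2) ^ (-(3 : ℝ) * k / 4) := by
  set φ : ℝ := (1 + Real.sqrt 5) / 2 with hφdef
  have hs5 : Real.sqrt 5 ^ 2 = 5 := Real.sq_sqrt (by norm_num)
  have hs5n : 0 ≤ Real.sqrt 5 := Real.sqrt_nonneg 5
  have hφ1 : 1 < φ := by rw [hφdef]; nlinarith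
  have hφ0 : 0 < φ := by linarith
  set r : ℝ := φ ^ (-(1/2) : ℝ) with hrdef
  set b : ℝ := φ ^ (-(3/2) : ℝ) with hbdef
  have hr0 : 0 < r := Real.rpow_pos_of_pos hφ0 _
  have hr1 : r < 1 := Real.rpow_lt_one_of_one_lt_of_neg hφ1 (by norm_num)
  have hb0 : 0 < b := Real.rpow_pos_of_pos hφ0 _
  have hb1 : b < 1 := Real.rpow_lt_one_of_one_lt_of_neg hφ1 (by norm_num)
  have h1r : 0 < 1 - r := by linarith
  have h1b : 0 < 1 - b := by linarith
  refine ⟨(1 / (1 - b)) * (1 / (1 - r)),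
    mul_pos (one_div_pos.mpr h1b) (one_div_pos.mpr h1r), ?_⟩
  intro k hk
  set lo := k / 3 + 1
  set hi := (k + 1) / 2 - 1 with hhidef
  have hhik : hi ≤ k := by omega
  -- step 1: inner sums
  have step1 : ∀ i ∈ Icc lo hi,
      ∑ m ∈ Icc (k - i) (2 * k / 3 - 1), φ ^ ((i : ℝ) - k - m / 2)
        ≤ b ^ (k - i) * (1 / (1 - r)) := by
    intro i hii
    simp only [mem_Icc] at hii
    have hik : i ≤ k := by omega
    have hterm : ∀ m : ℕ, φ ^ ((i : ℝ) - k - m / 2) = φ ^ ((i : ℝ) - k) * r ^ m := by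
      intro m
      rw [hrdef, ← Real.rpow_natCast (φ ^ (-(1/2) : ℝ)) m, ← Real.rpow_mul hφ0.le,
        ← Real.rpow_add hφ0]
      congr 1
      ring
    simp_rw [hterm, ← Finset.mul_sum]
    have h1 := geoIcc hr0.le hr1 (k - i) (2 * k / 3 - 1)
    calc φ ^ ((i : ℝ) - k) * ∑ m ∈ Icc (k - i) (2 * k / 3 - 1), r ^ m
        ≤ φ ^ ((i : ℝ) - k) * (r ^ (k - i) / (1 - r)) :=
          mul_le_mul_of_nonneg_left h1 (Real.rpow_pos_of_pos hφ0 _).le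
      _ = b ^ (k - i) * (1 / (1 - r)) := by
          rw [hbdef, hrdef, ← Real.rpow_natCast (φ ^ (-(1/2) : ℝ)) (k - i),
            ← Real.rpow_natCast (φ ^ (-(3/2) : ℝ)) (k - i),
            ← Real.rpow_mul hφ0.le, ← Real.rpow_mul hφ0.le]
          rw [div_eq_mul_one_div, ← mul_assoc, ← Real.rpow_add hφ0]
          congr 2
          rw [Nat.cast_sub hik]
          ring
  have step2 : ∑ i ∈ Icc lo hi, ∑ m ∈ Icc (k - i) (2 * k / 3 - 1),
      φ ^ ((i : ℝ) - k - m / 2) ≤ (b ^ (k - hi) / (1 - b)) * (1 / (1 - r)) := by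
    calc _ ≤ ∑ i ∈ Icc lo hi, b ^ (k - i) * (1 / (1 - r)) := Finset.sum_le_sum step1
      _ = (∑ i ∈ Icc lo hi, b ^ (k - i)) * (1 / (1 - r)) := by rw [Finset.sum_mul]
      _ ≤ (b ^ (k - hi) / (1 - b)) * (1 / (1 - r)) := by
          exact mul_le_mul_of_nonneg_right (geo2 hb0.le hb1 lo hi k hhik)
            (one_div_pos.mpr h1r).le
  refine step2.trans ?_
  have hkey : b ^ (k - hi) ≤ φ ^ (-(3 : ℝ) * k / 4) := by
    rw [hbdef, ← Real.rpow_natCast (φ ^ (-(3/2) : ℝ)) (k - hi), ← Real.rpow_mul hφ0.le]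
    rw [Real.rpow_le_rpow_left_iff hφ1]
    have h2 : k ≤ 2 * (k - hi) := by omega
    have h2' : (k : ℝ) ≤ 2 * ((k - hi : ℕ) : ℝ) := by exact_mod_cast h2
    nlinarith [h2']
  calc (b ^ (k - hi) / (1 - b)) * (1 / (1 - r))
      ≤ (φ ^ (-(3 : ℝ) * k / 4) / (1 - b)) * (1 / (1 - r)) := by
        apply mul_le_mul_of_nonneg_right _ (one_div_pos.mpr h1r).le
        rw [div_eq_mul_inv, div_eq_mul_inv]
        exact mul_le_mul_of_nonneg_right hkey (inv_nonneg.mpr h1b.le)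
    _ = 1 / (1 - b) * (1 / (1 - r)) * φ ^ (-(3 : ℝ) * k / 4) := by ring
end
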